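/- arXiv:1901.11316 — 2 statements merged into one kernel-verified Lean document; each statement's English description precedes it below -/
import Mathlib

section
/- Let q be a prime power and let G be a cyclic subgroup of PGL(2, F_q) of order d acting on the projective line P¹(F_q). Then every orbit of G on P¹(F_q) has size 1 or d. -/
open scoped LinearAlgebra.Projectivization
open Projectivization Matrix

/-- The natural action of `GL(2, F)` on the projective line `ℙ¹(F)`, induced by the action of
invertible matrices on `F²`. -/
noncomputable instance glProjAction {F : Type*} [Field F] :
    MulAction (GL (Fin 2) F) (ℙ F (Fin 2 → F)) where
  smul g x := Projectivization.map
    ((Matrix.GeneralLinearGroup.toLin g).toLinearEquiv : (Fin 2 → F) →ₗ[F] (Fin 2 → F))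
    (Matrix.GeneralLinearGroup.toLin g).toLinearEquiv.injective x
  one_smul x := by
    induction x using Projectivization.ind with
    | h v hv =>
      show Projectivization.map _ _ _ = _
      rw [Projectivization.map_mk]
      congr 1
      show Matrix.mulVecLin ((1 : GL (Fin 2) F) : Matrix (Fin 2) (Fin 2) F) v = v
      simp
  mul_smul g h x := by
    induction x using Projectivization.ind with
    | h v hv =>
      show Projectivization.map _ _ _ =
        Projectivization.map _ _ (Projectivization.map _ _ _)
      rw [Projectivization.map_mk, Projectivization.map_mk, Projectivization.map_mk]
      congr 1
      show Matrix.mulVecLin ((g * h : GL (Fin 2) F) : Matrix (Fin 2) (Fin 2) F) v =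
        Matrix.mulVecLin (g : Matrix (Fin 2) (Fin 2) F)
          (Matrix.mulVecLin (h : Matrix (Fin 2) (Fin 2) F) v)
      simp [Matrix.mulVecLin_mul]

/-!
An element `h` of `GL(2, F)` fixing a point `[v]` of `ℙ¹` has `v` as an eigenvector; if `h`
commutes with some `g` moving `[v]`, then `g v` is a second, independent eigenvector with the same
eigenvalue, so `h` is scalar. Now let `σ` generate `G` modulo scalars, so that the `G`-orbit of `x`
is its `⟨σ⟩`-orbit, of size the period `p` of `x` under `σ`. Since `σ ^ d` is scalar, `p ∣ d`; and
if `p ≠ 1` then `σ ^ p` fixes `x` and commutes with `σ`, which moves `x`, so `σ ^ p` is scalar and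
`d ∣ p`.
-/

open MulAction Subgroup

lemma MulAction.card_orbit_zpowers {Γ X : Type*} [Group Γ] [MulAction Γ X] (σ : Γ) (x : X) :
    Nat.card (orbit (zpowers σ) x) = period σ x := by
  rw [Nat.card_congr (orbitZPowersEquiv σ x), Nat.card_zmod]
  rfl

section TrivialKernel

variable {Γ X : Type*} [Group Γ] [MulAction Γ X] {N : Subgroup Γ} [N.Normal]

lemma orbit_eq_orbit_zpowers_of_map_mk_eq_zpowers (hN : ∀ n ∈ N, ∀ x : X, n • x = x)
    {G : Subgroup Γ} {σ : Γ} (hσG : σ ∈ G)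
    (hσ : zpowers (σ : Γ ⧸ N) = G.map (QuotientGroup.mk' N)) (x : X) :
    orbit G x = orbit (zpowers σ) x := by
  ext y
  constructor
  · rintro ⟨⟨g, hg⟩, rfl⟩
    obtain ⟨n, hn⟩ := mem_zpowers_iff.1 (hσ ▸ mem_map_of_mem (QuotientGroup.mk' N) hg)
    have hz : (σ ^ n)⁻¹ * g ∈ N := QuotientGroup.eq.1 (by simpa using hn)
    refine ⟨⟨σ ^ n, zpow_mem (mem_zpowers σ) n⟩, ?_⟩
    change σ ^ n • x = g • x
    rw [← mul_inv_cancel_left (σ ^ n) g, mul_smul, hN _ hz]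
  · rintro ⟨⟨g, hg⟩, rfl⟩
    exact ⟨⟨g, zpowers_le.2 hσG hg⟩, rfl⟩

lemma period_dvd_orderOf_mk (hN : ∀ n ∈ N, ∀ x : X, n • x = x) (σ : Γ) (x : X) :
    period σ x ∣ orderOf (σ : Γ ⧸ N) :=
  pow_smul_eq_iff_period_dvd.1 <| hN _
    (by rw [← QuotientGroup.eq_one_iff, QuotientGroup.mk_pow, pow_orderOf_eq_one]) x

end TrivialKernel

lemma Matrix.scalar_mulVec {n α : Type*} [Fintype n] [DecidableEq n] [Semiring α] (a : α)
    (v : n → α) : scalar n a *ᵥ v = a • v := by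
  ext i
  simp [scalar_apply, mulVec_diagonal]

namespace Matrix.GeneralLinearGroup

variable {F : Type*} [Field F]

lemma smul_mk (g : GL (Fin 2) F) {v : Fin 2 → F} (hv : v ≠ 0) :
    g • mk F v hv = mk F (g.val *ᵥ v)
      (by simpa using (toLin g).toLinearEquiv.map_ne_zero_iff.2 hv) :=
  map_mk _ _ v hv

lemma smul_eq_self_of_mem_center (z : GL (Fin 2) F) (hz : z ∈ center (GL (Fin 2) F))
    (x : ℙ F (Fin 2 → F)) : z • x = x := by
  obtain ⟨a, ha⟩ := mem_center_iff_val_mem_range_scalar.1 hz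
  induction x using Projectivization.ind with
  | h v hv =>
    exact (smul_mk z hv).trans ((mk_eq_mk_iff' F _ _ _ hv).2 ⟨a, by rw [← ha, scalar_mulVec]⟩)

lemma mem_center_of_commute_of_smul_eq_self {g h : GL (Fin 2) F} (hgh : Commute g h)
    {x : ℙ F (Fin 2 → F)} (hx : h • x = x) (hgx : g • x ≠ x) : h ∈ center (GL (Fin 2) F) := by
  induction x using Projectivization.ind with | h v hv => ?_
  rw [smul_mk h hv] at hx
  rw [smul_mk g hv] at hgx
  obtain ⟨a, ha⟩ := (mk_eq_mk_iff' F _ _ _ hv).1 hx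
  have hgv : h.val *ᵥ (g.val *ᵥ v) = a • (g.val *ᵥ v) := by
    rw [mulVec_mulVec, ← Units.val_mul, ← hgh.eq, Units.val_mul, ← mulVec_mulVec, ← ha,
      mulVec_smul]
  have hli : LinearIndependent F ![v, g.val *ᵥ v] :=
    (independent_mk_iff_LinearIndependent hv _).1 ((independent_pair_iff_ne _ _).2 hgx.symm)
  refine mem_center_iff_val_mem_range_scalar.2 ⟨a, Matrix.toLin'.injective <|
    LinearMap.ext_on_range (hli.span_eq_top_of_card_eq_finrank (by simp)) fun i => ?_⟩
  rw [Matrix.toLin'_apply, Matrix.toLin'_apply, scalar_mulVec]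
  fin_cases i
  exacts [ha, hgv.symm]

lemma pow_period_mem_center {σ : GL (Fin 2) F} {x : ℙ F (Fin 2 → F)} (hx : period σ x ≠ 1) :
    σ ^ period σ x ∈ center (GL (Fin 2) F) :=
  mem_center_of_commute_of_smul_eq_self (Commute.self_pow σ _) (pow_period_smul σ x)
    (mt period_eq_one_iff.2 hx)

end Matrix.GeneralLinearGroup

theorem stmt_8_general (d : ℕ) (F : Type*) [Field F] (G : Subgroup (GL (Fin 2) F))
    (hcyc : IsCyclic
      (G.map (QuotientGroup.mk' (Subgroup.center (GL (Fin 2) F)))))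
    (hd : Nat.card (G.map (QuotientGroup.mk' (Subgroup.center (GL (Fin 2) F)))) = d)
    (x : ℙ F (Fin 2 → F)) :
    Nat.card (MulAction.orbit G x) = 1 ∨ Nat.card (MulAction.orbit G x) = d := by
  obtain ⟨g, hg⟩ := (Subgroup.isCyclic_iff_exists_zpowers_eq_top _).1 hcyc
  obtain ⟨σ, hσG, rfl⟩ := mem_map.1 (hg ▸ mem_zpowers g)
  have hcenter := GeneralLinearGroup.smul_eq_self_of_mem_center (F := F)
  rw [← hg, Nat.card_zpowers] at hd
  rw [orbit_eq_orbit_zpowers_of_map_mk_eq_zpowers hcenter hσG hg, card_orbit_zpowers, ← hd]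
  refine or_iff_not_imp_left.2 fun hx => (period_dvd_orderOf_mk hcenter σ x).antisymm ?_
  refine orderOf_dvd_of_pow_eq_one ?_
  rw [← QuotientGroup.mk_pow, QuotientGroup.eq_one_iff]
  exact GeneralLinearGroup.pow_period_mem_center hx

/-- If a subgroup of `PGL(2, F_q)`, represented as the image in
`PGL(2, F_q) = GL(2, F_q)/Z` of a subgroup `G ≤ GL(2, F_q)` containing the center, is cyclic
of order `d`, then every orbit of `G` on the projective line `ℙ¹(F_q)` has size `1` or `d`. -/
theorem stmt_8 (q d : ℕ) (hq : IsPrimePow q) (F : Type*) [Field F] [Fintype F]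
    (hF : Fintype.card F = q) (G : Subgroup (GL (Fin 2) F))
    (hZ : Subgroup.center (GL (Fin 2) F) ≤ G)
    (hcyc : IsCyclic
      (G.map (QuotientGroup.mk' (Subgroup.center (GL (Fin 2) F)))))
    (hd : Nat.card (G.map (QuotientGroup.mk' (Subgroup.center (GL (Fin 2) F)))) = d)
    (x : ℙ F (Fin 2 → F)) :
    Nat.card (MulAction.orbit G x) = 1 ∨ Nat.card (MulAction.orbit G x) = d :=
  stmt_8_general d F G hcyc hd x
end

section
/- Let q be a prime power, α, β ∈ F_q² distinct points with span(β − α) = w, and let u be a one-dimensional subspace of F_q². Then the number of points γ ∈ F_q² with γ ≠ α, γ ≠ β, γ − α ∈ u, and β − γ ∈ u equals: q − 2 if u = w, and 0 if u ≠ w. -/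
/-- Intersection numbers `c_{uu}^w` of the scheme of the Galois affine plane of order `q`:
for distinct points `α, β` with direction `w` and a one-dimensional subspace `u`, the number
of points `γ ∉ {α, β}` with `γ - α ∈ u` and `β - γ ∈ u` equals `q - 2` if `u = w`, and `0`
otherwise. -/
theorem stmt_13 (q : ℕ) (hq : IsPrimePow q) (F : Type*) [Field F] [Fintype F]
    (hF : Fintype.card F = q) (α β : F × F) (hαβ : α ≠ β)
    (u w : Submodule F (F × F)) (hu : Module.finrank F u = 1)
    (hw : Module.finrank F w = 1) (hspan : Submodule.span F {β - α} = w) :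
    (u = w →
      Nat.card {γ : F × F // γ ≠ α ∧ γ ≠ β ∧ γ - α ∈ u ∧ β - γ ∈ u} = q - 2) ∧
    (u ≠ w →
      Nat.card {γ : F × F // γ ≠ α ∧ γ ≠ β ∧ γ - α ∈ u ∧ β - γ ∈ u} = 0) := by
  classical
  have hv : β - α ≠ 0 := sub_ne_zero.mpr (Ne.symm hαβ)
  constructor
  · intro huw
    subst huw
    subst hspan
    have key : {γ : F × F // γ ≠ α ∧ γ ≠ β ∧ γ - α ∈ Submodule.span F {β - α} ∧
        β - γ ∈ Submodule.span F {β - α}} ≃ {c : F // c ≠ 0 ∧ c ≠ 1} := by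
      refine (Equiv.ofBijective (fun c : {c : F // c ≠ 0 ∧ c ≠ 1} =>
        (⟨α + c.1 • (β - α), ?_, ?_, ?_, ?_⟩ : {γ : F × F // γ ≠ α ∧ γ ≠ β ∧
          γ - α ∈ Submodule.span F {β - α} ∧ β - γ ∈ Submodule.span F {β - α}}) ) ⟨?_, ?_⟩).symm
      · intro h
        have : c.1 • (β - α) = 0 := by
          have := sub_eq_zero.mpr h
          simpa using this
        rcases smul_eq_zero.mp this with h0 | h0
        · exact c.2.1 h0
        · exact hv h0
      · intro h
        have h1 : (c.1 - 1) • (β - α) = 0 := by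
          have : α + c.1 • (β - α) - β = (c.1 - 1) • (β - α) := by
            simp [sub_smul, one_smul]; abel
          rw [← this, sub_eq_zero]; exact h
        rcases smul_eq_zero.mp h1 with h0 | h0
        · exact c.2.2 (sub_eq_zero.mp h0)
        · exact hv h0
      · have : α + c.1 • (β - α) - α = c.1 • (β - α) := by abel
        rw [this]
        exact Submodule.smul_mem _ _ (Submodule.mem_span_singleton_self _)
      · have : β - (α + c.1 • (β - α)) = (1 - c.1) • (β - α) := by
          simp [sub_smul, one_smul]; abel
        rw [this]
        exact Submodule.smul_mem _ _ (Submodule.mem_span_singleton_self _)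
      · rintro ⟨c, hc⟩ ⟨d, hd⟩ h
        have h' : c • (β - α) = d • (β - α) := by
          have := congrArg Subtype.val h
          simpa using this
        have : (c - d) • (β - α) = 0 := by rw [sub_smul, h', sub_self]
        rcases smul_eq_zero.mp this with h0 | h0
        · exact Subtype.ext (sub_eq_zero.mp h0)
        · exact absurd h0 hv
      · rintro ⟨γ, hγα, hγβ, hγ1, hγ2⟩
        obtain ⟨c, hc⟩ := Submodule.mem_span_singleton.mp hγ1
        refine ⟨⟨c, ?_, ?_⟩, ?_⟩
        · rintro rfl
          apply hγα
          have : γ - α = 0 := by rw [← hc]; simp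
          exact sub_eq_zero.mp this
        · rintro rfl
          apply hγβ
          rw [one_smul] at hc
          have h1 := congrArg (· + α) hc
          simpa using h1.symm
        · apply Subtype.ext
          show α + c • (β - α) = γ
          rw [hc]; abel
    rw [Nat.card_congr key, Nat.card_eq_fintype_card]
    have e : {c : F // c ≠ 0 ∧ c ≠ 1} ≃ {c : F // ¬(c = 0 ∨ c = 1)} :=
      Equiv.subtypeEquivRight (fun c => by tauto)
    rw [Fintype.card_congr e, Fintype.card_subtype_compl, hF]
    congr 1
    rw [Fintype.card_subtype]
    have hfil : Finset.filter (fun c : F => c = 0 ∨ c = 1) Finset.univ = {0, 1} := by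
      ext c; simp
    rw [hfil]
    rw [Finset.card_insert_of_notMem (by simp [(zero_ne_one (α := F))]), Finset.card_singleton]
  · intro huw
    rw [Nat.card_eq_zero]
    left
    constructor
    rintro ⟨γ, hγα, hγβ, hγ1, hγ2⟩
    have hβα : β - α ∈ u := by
      have : β - α = (β - γ) + (γ - α) := by abel
      rw [this]; exact Submodule.add_mem _ hγ2 hγ1
    have hle : w ≤ u := by
      rw [← hspan]
      exact Submodule.span_le.mpr (Set.singleton_subset_iff.mpr hβα)
    exact huw (Submodule.eq_of_le_of_finrank_eq hle (by rw [hu, hw])).symm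
end
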